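/- arXiv:2603.18114 — 4 statements merged into one kernel-verified Lean document; each statement's English description precedes it below -/
import Mathlib

section
/- Let $S$ be a finite set and for each $i\in S$ let $u_i:[0,\bar P]\to\mathbb{R}$ be continuous. For $\mu\in\mathbb{R}$ define $\phi_i(\mu)=\max_{p\in[0,\bar P]}(p-\mu)e^{u_i(p)}$ and $\Phi(\mu)=\sum_{i\in S}\phi_i(\mu)$. Then $F(\mu):=\Phi(\mu)-\mu$ is continuous and strictly decreasing on $[0,\bar P]$, satisfies $F(0)\ge 0$ and $F(\bar P)\le -\bar P<0$, and hence has a unique zero $\mu^*\in[0,\bar P]$. -/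
open Set

/-!
Each `φ_i` is a supremum of the affine functions `μ ↦ (p - μ) e^{u_i(p)}` of nonpositive slope,
hence antitone, and it is continuous because the supremum runs over the compact set `[0, P̄]`.
So `F = Φ - id` is continuous and strictly decreasing; taking `p = 0` gives `F 0 ≥ 0`, and
`p ≤ P̄` makes every term of `Φ(P̄)` nonpositive, so the intermediate value theorem yields the
unique zero.
-/

theorem StrictAntiOn.existsUnique_eq_of_mem_Icc
    {α δ : Type*} [ConditionallyCompleteLinearOrder α] [TopologicalSpace α] [OrderTopology α]
    [DenselyOrdered α] [LinearOrder δ] [TopologicalSpace δ] [OrderClosedTopology δ]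
    {f : α → δ} {a b : α} {c : δ} (hf : StrictAntiOn f (Icc a b))
    (hfc : ContinuousOn f (Icc a b)) (hab : a ≤ b) (hc : c ∈ Icc (f b) (f a)) :
    ∃! x, x ∈ Icc a b ∧ f x = c := by
  obtain ⟨x, hx, rfl⟩ := intermediate_value_Icc' hab hfc hc
  exact ⟨x, ⟨hx, rfl⟩, fun y ⟨hy, hyx⟩ => hf.injOn hy hx hyx⟩

/-- The paper's `φ_i(μ)` is `maxProfit (Icc 0 P̄) (fun p => exp (u_i p)) μ`. -/
noncomputable def maxProfit (K : Set ℝ) (w : ℝ → ℝ) (μ : ℝ) : ℝ :=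
  sSup ((fun p => (p - μ) * w p) '' K)

section maxProfit

variable {K : Set ℝ} {w : ℝ → ℝ}

lemma le_maxProfit (hK : IsCompact K) (hw : ContinuousOn w K) {p : ℝ} (hp : p ∈ K) (μ : ℝ) :
    (p - μ) * w p ≤ maxProfit K w μ :=
  le_csSup ((hK.image_of_continuousOn ((continuousOn_id.sub continuousOn_const).mul hw)).bddAbove)
    (mem_image_of_mem _ hp)

lemma maxProfit_antitone (hK : IsCompact K) (hw : ContinuousOn w K) (hw0 : ∀ p ∈ K, 0 ≤ w p) :
    Antitone (maxProfit K w) := by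
  intro μ μ' hμ
  rcases K.eq_empty_or_nonempty with rfl | hne
  · simp [maxProfit]
  refine csSup_le (hne.image _) ?_
  rintro _ ⟨p, hp, rfl⟩
  exact (mul_le_mul_of_nonneg_right (by linarith) (hw0 p hp)).trans (le_maxProfit hK hw hp μ)

lemma continuous_maxProfit (hK : IsCompact K) (hw : ContinuousOn w K) :
    Continuous (maxProfit K w) := by
  have hcont : Continuous fun q : ℝ × K => ((q.2 : ℝ) - q.1) * w q.2 :=
    (continuous_subtype_val.comp continuous_snd |>.sub continuous_fst).mul
      (hw.domRestrict.comp continuous_snd)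
  convert (isCompact_iff_isCompact_univ.1 hK).continuous_sSup
    (f := fun μ (p : K) => ((p : ℝ) - μ) * w p) hcont using 2 with μ
  rw [maxProfit, image_univ, image_eq_range]

lemma maxProfit_nonpos {μ : ℝ} (hKμ : ∀ p ∈ K, p ≤ μ) (hw0 : ∀ p ∈ K, 0 ≤ w p) :
    maxProfit K w μ ≤ 0 :=
  Real.sSup_nonpos <| by
    rintro _ ⟨p, hp, rfl⟩
    exact mul_nonpos_of_nonpos_of_nonneg (sub_nonpos.2 (hKμ p hp)) (hw0 p hp)

end maxProfit

/-- Fixed-point characterization for MNL joint pricing: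
`F(μ) = ∑_{i∈S} max_{p∈[0,P̄]} (p-μ) e^{u_i(p)} - μ` is continuous and strictly
decreasing on `[0,P̄]`, with `F(0) ≥ 0` and `F(P̄) ≤ -P̄ < 0`, hence it has a
unique zero `μ* ∈ [0,P̄]`. -/
theorem mnl_fixed_point {ι : Type*} (S : Finset ι) (Pbar : ℝ) (hP : 0 < Pbar)
    (u : ι → ℝ → ℝ) (hu : ∀ i ∈ S, ContinuousOn (u i) (Icc 0 Pbar)) :
    (ContinuousOn (fun μ =>
        (∑ i ∈ S, sSup ((fun p => (p - μ) * Real.exp (u i p)) '' Icc 0 Pbar)) - μ)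
      (Icc 0 Pbar)) ∧
    (StrictAntiOn (fun μ =>
        (∑ i ∈ S, sSup ((fun p => (p - μ) * Real.exp (u i p)) '' Icc 0 Pbar)) - μ)
      (Icc 0 Pbar)) ∧
    0 ≤ (∑ i ∈ S, sSup ((fun p => (p - (0:ℝ)) * Real.exp (u i p)) '' Icc 0 Pbar)) - 0 ∧
    (∑ i ∈ S, sSup ((fun p => (p - Pbar) * Real.exp (u i p)) '' Icc 0 Pbar)) - Pbar ≤ -Pbar ∧
    -Pbar < 0 ∧
    (∃! μ : ℝ, μ ∈ Icc (0:ℝ) Pbar ∧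
      (∑ i ∈ S, sSup ((fun p => (p - μ) * Real.exp (u i p)) '' Icc 0 Pbar)) - μ = 0) := by
  set K := Icc 0 Pbar
  have hw : ∀ i ∈ S, ContinuousOn (fun p => Real.exp (u i p)) K := fun i hi => (hu i hi).rexp
  have hw0 : ∀ i, ∀ p ∈ K, 0 ≤ Real.exp (u i p) := fun _ _ _ => (Real.exp_pos _).le
  set F : ℝ → ℝ := fun μ => (∑ i ∈ S, maxProfit K (fun p => Real.exp (u i p)) μ) - μ
  change ContinuousOn F K ∧ StrictAntiOn F K ∧ 0 ≤ F 0 ∧ F Pbar ≤ -Pbar ∧ -Pbar < 0 ∧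
    ∃! μ, μ ∈ K ∧ F μ = 0
  have hcont : ContinuousOn F K :=
    ((continuous_finsetSum S fun i hi => continuous_maxProfit isCompact_Icc (hw i hi)).sub
      continuous_id).continuousOn
  have hanti : StrictAntiOn F K := fun μ _ ν _ hμν => by
    have := Finset.sum_le_sum fun i hi =>
      maxProfit_antitone isCompact_Icc (hw i hi) (hw0 i) hμν.le
    exact show _ - _ < _ - _ by linarith
  have hF0 : 0 ≤ F 0 := by
    simpa [F] using Finset.sum_nonneg fun i hi => by
      simpa using le_maxProfit isCompact_Icc (hw i hi) (left_mem_Icc.2 hP.le) 0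
  have hFP : F Pbar ≤ -Pbar := (sub_le_sub_right (Finset.sum_nonpos fun i _ =>
    maxProfit_nonpos (fun _ hp => hp.2) (hw0 i)) Pbar).trans_eq (zero_sub Pbar)
  refine ⟨hcont, hanti, hF0, hFP, neg_neg_of_pos hP, ?_⟩
  exact hanti.existsUnique_eq_of_mem_Icc hcont hP.le ⟨by linarith, hF0⟩
end

section
/- Let $S$ be a finite set, $u_i:[0,\bar P]\to\mathbb{R}$ continuous for $i\in S$, and define the MNL revenue $R(\mathbf{p})=\frac{\sum_{i\in S}p_i e^{u_i(p_i)}}{1+\sum_{j\in S}e^{u_j(p_j)}}$ for $\mathbf{p}\in[0,\bar P]^S$. Let $\mu^*$ be the unique fixed point of $\mu=\sum_{i\in S}\max_{p\in[0,\bar P]}(p-\mu)e^{u_i(p)}$ on $[0,\bar P]$. Then $\sup_{\mathbf{p}\in[0,\bar P]^S}R(\mathbf{p})=\mu^*$. -/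
/-! Since `1 + ∑ wᵢ > 0`, the revenue `∑ pᵢwᵢ / (1 + ∑ wᵢ)` is `≤ μ` iff `∑ (pᵢ - μ) wᵢ ≤ μ`, and
`= μ` iff `∑ (pᵢ - μ) wᵢ = μ`. At the fixed point `μ*` every price vector has
`∑ (pᵢ - μ*) wᵢ(pᵢ) ≤ ∑ maxₚ (p - μ*) wᵢ(p) = μ*`, with equality at coordinatewise maximizers, which
exist by compactness of `[0, P̄]`; so `μ*` is the greatest revenue. -/

open Set Finset

section Revenue

variable {ι : Type*} (S : Finset ι) (p w : ι → ℝ)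

theorem sum_sub_mul_eq_sub_mul_sum (μ : ℝ) :
    ∑ i ∈ S, (p i - μ) * w i = ∑ i ∈ S, p i * w i - μ * ∑ i ∈ S, w i := by
  rw [mul_sum, ← sum_sub_distrib]
  exact sum_congr rfl fun i _ => sub_mul _ _ _

variable {S w}

theorem one_add_sum_pos (hw : ∀ i ∈ S, 0 ≤ w i) : 0 < 1 + ∑ i ∈ S, w i := by
  linarith [sum_nonneg hw]

theorem div_one_add_sum_le_iff (hw : ∀ i ∈ S, 0 ≤ w i) (μ : ℝ) :
    (∑ i ∈ S, p i * w i) / (1 + ∑ i ∈ S, w i) ≤ μ ↔ ∑ i ∈ S, (p i - μ) * w i ≤ μ := by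
  rw [div_le_iff₀ (one_add_sum_pos hw), sum_sub_mul_eq_sub_mul_sum]
  constructor <;> intro h <;> linarith

theorem div_one_add_sum_eq_iff (hw : ∀ i ∈ S, 0 ≤ w i) (μ : ℝ) :
    (∑ i ∈ S, p i * w i) / (1 + ∑ i ∈ S, w i) = μ ↔ ∑ i ∈ S, (p i - μ) * w i = μ := by
  rw [div_eq_iff (one_add_sum_pos hw).ne', sum_sub_mul_eq_sub_mul_sum]
  constructor <;> intro h <;> linarith

end Revenue

theorem isGreatest_revenue_of_fixed_point {ι : Type*} {S : Finset ι} {s : Set ℝ}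
    {w : ι → ℝ → ℝ} (hw : ∀ i ∈ S, ∀ x, 0 ≤ w i x) {μ : ℝ} {q : ι → ℝ}
    (hq : ∀ i ∈ S, q i ∈ s) (hqmax : ∀ i ∈ S, ∀ x ∈ s, (x - μ) * w i x ≤ (q i - μ) * w i (q i))
    (hfix : μ = ∑ i ∈ S, (q i - μ) * w i (q i)) :
    IsGreatest {y : ℝ | ∃ p : ι → ℝ, (∀ i ∈ S, p i ∈ s) ∧
        y = (∑ i ∈ S, p i * w i (p i)) / (1 + ∑ j ∈ S, w j (p j))} μ := by
  refine ⟨⟨q, hq, ((div_one_add_sum_eq_iff q (fun i hi => hw i hi _) μ).2 hfix.symm).symm⟩, ?_⟩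
  rintro y ⟨p, hp, rfl⟩
  refine (div_one_add_sum_le_iff p (fun i hi => hw i hi _) μ).2 ?_
  exact (sum_le_sum fun i hi => hqmax i hi (p i) (hp i hi)).trans_eq hfix.symm

theorem mnl_revenue_eq_fixed_point_general {ι : Type*} (S : Finset ι) (Pbar : ℝ) (hP : 0 < Pbar)
    (u : ι → ℝ → ℝ) (hu : ∀ i ∈ S, ContinuousOn (u i) (Icc 0 Pbar))
    (μstar : ℝ)
    (hfix : μstar = ∑ i ∈ S,
      sSup ((fun p => (p - μstar) * Real.exp (u i p)) '' Icc 0 Pbar)) :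
    sSup {y : ℝ | ∃ p : ι → ℝ, (∀ i ∈ S, p i ∈ Icc (0:ℝ) Pbar) ∧
        y = (∑ i ∈ S, p i * Real.exp (u i (p i))) /
            (1 + ∑ j ∈ S, Real.exp (u j (p j)))} = μstar := by
  have hmax : ∀ i ∈ S, ∃ q ∈ Icc 0 Pbar,
      sSup ((fun p => (p - μstar) * Real.exp (u i p)) '' Icc 0 Pbar)
        = (q - μstar) * Real.exp (u i q) ∧
      ∀ x ∈ Icc 0 Pbar, (x - μstar) * Real.exp (u i x) ≤ (q - μstar) * Real.exp (u i q) :=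
    fun i hi => isCompact_Icc.exists_sSup_image_eq_and_ge (nonempty_Icc.2 hP.le)
      ((continuousOn_id.sub continuousOn_const).mul (hu i hi).rexp)
  choose! q hq hsup hqmax using hmax
  rw [sum_congr rfl hsup] at hfix
  exact (isGreatest_revenue_of_fixed_point (fun _ _ _ => (Real.exp_pos _).le)
    hq hqmax hfix).csSup_eq

/-- The price-optimized MNL revenue equals the unique fixed point `μ*` of
`μ = ∑_{i∈S} max_{p∈[0,P̄]} (p - μ) e^{u_i(p)}`. -/
theorem mnl_revenue_eq_fixed_point {ι : Type*} (S : Finset ι) (Pbar : ℝ) (hP : 0 < Pbar)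
    (u : ι → ℝ → ℝ) (hu : ∀ i ∈ S, ContinuousOn (u i) (Icc 0 Pbar))
    (μstar : ℝ) (hmem : μstar ∈ Icc (0:ℝ) Pbar)
    (hfix : μstar = ∑ i ∈ S,
      sSup ((fun p => (p - μstar) * Real.exp (u i p)) '' Icc 0 Pbar)) :
    sSup {y : ℝ | ∃ p : ι → ℝ, (∀ i ∈ S, p i ∈ Icc (0:ℝ) Pbar) ∧
        y = (∑ i ∈ S, p i * Real.exp (u i (p i))) /
            (1 + ∑ j ∈ S, Real.exp (u j (p j)))} = μstar :=
  mnl_revenue_eq_fixed_point_general S Pbar hP u hu μstar hfix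
end

section
/- Let $S$ be a finite set and let $v_i,\tilde v_i:[0,\bar P]\to\mathbb{R}$ be continuous with $v_i(p)\le\tilde v_i(p)$ for all $i\in S$ and all $p\in[0,\bar P]$. Define the price-optimized MNL revenue $\mathcal{V}(u):=\sup_{\mathbf{p}\in[0,\bar P]^S}\frac{\sum_{i\in S}p_i e^{u_i(p_i)}}{1+\sum_{j\in S}e^{u_j(p_j)}}$. Then $\mathcal{V}(v)\le\mathcal{V}(\tilde v)$. -/
/-!
Write `R_u(p)` for the MNL revenue of the price vector `p` under utilities `u`. Since the
denominator is positive, `μ < R_u(p)` iff `μ < ∑ i, (p i - μ) * exp (u i (p i))`. Let `μ` be the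
optimal revenue under `ṽ` and suppose `μ < R_v(p)`. Raising every price to `q i = max (p i) μ`
does not decrease any summand `(p i - μ) * exp (u i (p i))` (negative ones become zero) and
switching from `v` to `ṽ` does not decrease the nonnegative ones, so `μ < R_ṽ(q)`, contradicting
the optimality of `μ`.
-/

open Set Finset Real

namespace MNL

variable {ι : Type*} (S : Finset ι)

noncomputable def revenue (u : ι → ℝ → ℝ) (p : ι → ℝ) : ℝ :=
  (∑ i ∈ S, p i * exp (u i (p i))) / (1 + ∑ j ∈ S, exp (u j (p j)))

def revenueSet (Pbar : ℝ) (u : ι → ℝ → ℝ) : Set ℝ :=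
  {y | ∃ p : ι → ℝ, (∀ i ∈ S, p i ∈ Icc (0:ℝ) Pbar) ∧ y = revenue S u p}

variable {S}

theorem lt_revenue_iff {u : ι → ℝ → ℝ} {p : ι → ℝ} {μ : ℝ} :
    μ < revenue S u p ↔ μ < ∑ i ∈ S, (p i - μ) * exp (u i (p i)) := by
  have hden : 0 < 1 + ∑ j ∈ S, exp (u j (p j)) := by positivity
  have hsplit : ∑ i ∈ S, (p i - μ) * exp (u i (p i)) =
      ∑ i ∈ S, p i * exp (u i (p i)) - μ * ∑ i ∈ S, exp (u i (p i)) := by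
    rw [mul_sum, ← sum_sub_distrib]
    exact sum_congr rfl fun i _ => by ring
  rw [revenue, lt_div_iff₀ hden, hsplit]
  constructor <;> intro h <;> linarith

theorem revenue_le {u : ι → ℝ → ℝ} {p : ι → ℝ} {c : ℝ} (hc : 0 ≤ c)
    (hp : ∀ i ∈ S, p i ≤ c) : revenue S u p ≤ c := by
  refine not_lt.mp fun hlt => ?_
  have hnonpos : ∑ i ∈ S, (p i - c) * exp (u i (p i)) ≤ 0 :=
    sum_nonpos fun i hi => mul_nonpos_of_nonpos_of_nonneg (by linarith [hp i hi]) (exp_pos _).le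
  linarith [lt_revenue_iff.mp hlt]

theorem zero_mem_revenueSet {Pbar : ℝ} (hP : 0 ≤ Pbar) (u : ι → ℝ → ℝ) :
    (0 : ℝ) ∈ revenueSet S Pbar u :=
  ⟨0, fun _ _ => ⟨le_rfl, hP⟩, by simp [revenue]⟩

theorem mem_upperBounds_revenueSet {Pbar : ℝ} (hP : 0 ≤ Pbar) (u : ι → ℝ → ℝ) :
    Pbar ∈ upperBounds (revenueSet S Pbar u) := by
  rintro y ⟨p, hp, rfl⟩
  exact revenue_le hP fun i hi => (hp i hi).2

theorem sub_mul_exp_le_max_sub_mul_exp {f g : ℝ → ℝ} {x μ : ℝ} (hfg : f x ≤ g x) :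
    (x - μ) * exp (f x) ≤ (max x μ - μ) * exp (g (max x μ)) := by
  rcases le_or_gt μ x with hμx | hxμ
  · rw [max_eq_left hμx]
    exact mul_le_mul_of_nonneg_left (exp_le_exp.mpr hfg) (sub_nonneg.mpr hμx)
  · rw [max_eq_right hxμ.le, sub_self, zero_mul]
    exact mul_nonpos_of_nonpos_of_nonneg (by linarith) (exp_pos _).le

theorem mem_upperBounds_revenueSet_of_le {Pbar μ : ℝ} {v w : ι → ℝ → ℝ}
    (hle : ∀ i ∈ S, ∀ x ∈ Icc (0:ℝ) Pbar, v i x ≤ w i x) (hμ : μ ≤ Pbar)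
    (hw : μ ∈ upperBounds (revenueSet S Pbar w)) : μ ∈ upperBounds (revenueSet S Pbar v) := by
  rintro y ⟨p, hp, rfl⟩
  refine not_lt.mp fun hlt => ?_
  set q : ι → ℝ := fun i => max (p i) μ
  have hq : ∀ i ∈ S, q i ∈ Icc (0:ℝ) Pbar := fun i hi =>
    ⟨le_max_of_le_left (hp i hi).1, max_le (hp i hi).2 hμ⟩
  have hsum : ∑ i ∈ S, (p i - μ) * exp (v i (p i)) ≤ ∑ i ∈ S, (q i - μ) * exp (w i (q i)) :=
    sum_le_sum fun i hi => sub_mul_exp_le_max_sub_mul_exp (hle i hi _ (hp i hi))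
  have hwq : μ < revenue S w q := lt_revenue_iff.mpr ((lt_revenue_iff.mp hlt).trans_le hsum)
  exact (hw ⟨q, hq, rfl⟩).not_gt hwq

end MNL

open MNL in
theorem mnl_revenue_optimism_general {ι : Type*} (S : Finset ι) (Pbar : ℝ) (hP : 0 < Pbar)
    (v vt : ι → ℝ → ℝ)
    (hle : ∀ i ∈ S, ∀ p ∈ Icc (0:ℝ) Pbar, v i p ≤ vt i p) :
    sSup {y : ℝ | ∃ p : ι → ℝ, (∀ i ∈ S, p i ∈ Icc (0:ℝ) Pbar) ∧
        y = (∑ i ∈ S, p i * Real.exp (v i (p i))) /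
            (1 + ∑ j ∈ S, Real.exp (v j (p j)))} ≤
    sSup {y : ℝ | ∃ p : ι → ℝ, (∀ i ∈ S, p i ∈ Icc (0:ℝ) Pbar) ∧
        y = (∑ i ∈ S, p i * Real.exp (vt i (p i))) /
            (1 + ∑ j ∈ S, Real.exp (vt j (p j)))} := by
  change sSup (revenueSet S Pbar v) ≤ sSup (revenueSet S Pbar vt)
  have hbdd : BddAbove (revenueSet S Pbar vt) := ⟨Pbar, mem_upperBounds_revenueSet hP.le vt⟩
  have hsup_le : sSup (revenueSet S Pbar vt) ≤ Pbar :=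
    csSup_le ⟨0, zero_mem_revenueSet hP.le vt⟩ (mem_upperBounds_revenueSet hP.le vt)
  exact csSup_le ⟨0, zero_mem_revenueSet hP.le v⟩
    (mem_upperBounds_revenueSet_of_le hle hsup_le fun _ hy => le_csSup hbdd hy)

/-- Revenue optimism: if `v_i ≤ ṽ_i` pointwise on `[0,P̄]` for all `i ∈ S`, then
the price-optimized MNL revenue under `v` is at most that under `ṽ`. -/
theorem mnl_revenue_optimism {ι : Type*} (S : Finset ι) (Pbar : ℝ) (hP : 0 < Pbar)
    (v vt : ι → ℝ → ℝ)
    (hv : ∀ i ∈ S, ContinuousOn (v i) (Icc 0 Pbar))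
    (hvt : ∀ i ∈ S, ContinuousOn (vt i) (Icc 0 Pbar))
    (hle : ∀ i ∈ S, ∀ p ∈ Icc (0:ℝ) Pbar, v i p ≤ vt i p) :
    sSup {y : ℝ | ∃ p : ι → ℝ, (∀ i ∈ S, p i ∈ Icc (0:ℝ) Pbar) ∧
        y = (∑ i ∈ S, p i * Real.exp (v i (p i))) /
            (1 + ∑ j ∈ S, Real.exp (v j (p j)))} ≤
    sSup {y : ℝ | ∃ p : ι → ℝ, (∀ i ∈ S, p i ∈ Icc (0:ℝ) Pbar) ∧
        y = (∑ i ∈ S, p i * Real.exp (vt i (p i))) /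
            (1 + ∑ j ∈ S, Real.exp (vt j (p j)))} :=
  mnl_revenue_optimism_general S Pbar hP v vt hle
end

section
/- Let $q\in\mathbb{R}^n$ have nonnegative entries with $q_i\ge\kappa>0$ for all $i$ and $\sum_{i=1}^n q_i\le 1-\kappa$. Let $M=\mathrm{Diag}(q)-qq^\top$. Then for every $z\in\mathbb{R}^n$, $z^\top M z\ge\kappa^2\|z\|_2^2$. -/
open Matrix

/-!
Writing `p = 1 - ∑ q` for the mass of the outside option, `zᵀ M z = ∑ qᵢ zᵢ² - (∑ qᵢ zᵢ)²`, and
weighted Cauchy–Schwarz bounds `(∑ qᵢ zᵢ)² ≤ (∑ qᵢ) ∑ qᵢ zᵢ²`, so `zᵀ M z ≥ p ∑ qᵢ zᵢ²`.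
With `p ≥ κ` and `qᵢ ≥ κ` this is at least `κ² ∑ zᵢ²`.
-/

theorem dotProduct_diagonal_sub_vecMulVec_mulVec {ι R : Type*} [Fintype ι] [DecidableEq ι]
    [CommRing R] (q z : ι → R) :
    z ⬝ᵥ ((diagonal q - vecMulVec q q) *ᵥ z) = ∑ i, q i * z i ^ 2 - (∑ i, q i * z i) ^ 2 := by
  rw [sub_mulVec, vecMulVec_mulVec, dotProduct_sub, sq (∑ i, q i * z i), Finset.sum_mul]
  simp only [dotProduct, mulVec_diagonal, Pi.smul_apply, MulOpposite.smul_eq_mul_unop,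
    MulOpposite.unop_op]
  congr 1 <;> refine Finset.sum_congr rfl fun i _ => by ring

theorem one_sub_sum_mul_le_dotProduct_diagonal_sub_vecMulVec_mulVec {ι R : Type*} [Fintype ι]
    [DecidableEq ι] [CommRing R] [LinearOrder R] [IsStrictOrderedRing R] {q : ι → R}
    (hq : ∀ i, 0 ≤ q i) (z : ι → R) :
    (1 - ∑ i, q i) * ∑ i, q i * z i ^ 2 ≤ z ⬝ᵥ ((diagonal q - vecMulVec q q) *ᵥ z) := by
  have cauchy_schwarz : (∑ i, q i * z i) ^ 2 ≤ (∑ i, q i) * ∑ i, q i * z i ^ 2 :=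
    Finset.sum_sq_le_sum_mul_sum_of_sq_le_mul _ (fun i _ => hq i)
      (fun i _ => mul_nonneg (hq i) (sq_nonneg _)) fun i _ => by rw [mul_pow, sq (q i), mul_assoc]
  rw [dotProduct_diagonal_sub_vecMulVec_mulVec]
  linarith

/-- Eigenvalue lower bound for the MNL Fisher-information weight matrix:
if `q_i ≥ κ > 0` and `∑ q_i ≤ 1 - κ` (outside option has mass at least `κ`),
then `M = Diag(q) - q qᵀ` satisfies `zᵀ M z ≥ κ² ‖z‖²`. -/
theorem mnl_weight_matrix_lower (n : ℕ) (κ : ℝ) (hκ : 0 < κ)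
    (q : Fin n → ℝ) (hq : ∀ i, κ ≤ q i) (hsum : ∑ i, q i ≤ 1 - κ)
    (z : Fin n → ℝ) :
    κ ^ 2 * ∑ i, z i ^ 2 ≤ z ⬝ᵥ ((Matrix.diagonal q - Matrix.vecMulVec q q) *ᵥ z) := by
  have hq₀ : ∀ i, 0 ≤ q i := fun i => hκ.le.trans (hq i)
  calc
    κ ^ 2 * ∑ i, z i ^ 2 = κ * ∑ i, κ * z i ^ 2 := by rw [sq, mul_assoc, Finset.mul_sum]
    _ ≤ κ * ∑ i, q i * z i ^ 2 := by gcongr with i; exact hq i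
    _ ≤ (1 - ∑ i, q i) * ∑ i, q i * z i ^ 2 := by
      gcongr
      · exact Finset.sum_nonneg fun i _ => mul_nonneg (hq₀ i) (sq_nonneg _)
      · linarith
    _ ≤ _ := one_sub_sum_mul_le_dotProduct_diagonal_sub_vecMulVec_mulVec hq₀ z
end
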